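/- arXiv:2207.11732 — 3 statements merged into one kernel-verified Lean document; each statement's English description precedes it below -/
import Mathlib

section
/- Let η, η', χ be finite positive measures with η(ℝ) = η'(ℝ), and suppose a measure μ satisfies μ ≤_pcd η and μ ≤_pcd η'. Then μ ≤_pcd Down(η,η'), where Down(η,η') is the law of min(G_η(U), G_{η'}(U)) for U uniform on [0, η(ℝ)]. -/
open MeasureTheory Set Filter Topology

noncomputable def mmass (η : Measure ℝ) : ℝ := (η Set.univ).toReal
noncomputable def cdf (η : Measure ℝ) (x : ℝ) : ℝ := (η (Set.Iic x)).toReal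
noncomputable def quant (η : Measure ℝ) (u : ℝ) : ℝ := sInf {k : ℝ | u ≤ cdf η k}

section lems
variable (η : Measure ℝ) [IsFiniteMeasure η]

lemma cdf_mono : Monotone (cdf η) := fun a b hab =>
  ENNReal.toReal_le_toReal (measure_ne_top _ _) (measure_ne_top _ _) |>.mpr
    (measure_mono (Iic_subset_Iic.mpr hab))

lemma cdf_nonneg (x : ℝ) : 0 ≤ cdf η x := ENNReal.toReal_nonneg

lemma cdf_le_mmass (x : ℝ) : cdf η x ≤ mmass η :=
  ENNReal.toReal_le_toReal (measure_ne_top _ _) (measure_ne_top _ _) |>.mpr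
    (measure_mono (subset_univ _))

lemma mmass_nonneg : 0 ≤ mmass η := ENNReal.toReal_nonneg

lemma tendsto_cdf_atTop : Tendsto (cdf η) atTop (𝓝 (mmass η)) := by
  have h := tendsto_measure_Iic_atTop (μ := η)
  exact (ENNReal.tendsto_toReal (measure_ne_top _ _)).comp h

lemma tendsto_cdf_atBot : Tendsto (cdf η) atBot (𝓝 0) := by
  have h : Tendsto (fun x : ℝ => η (Iic x)) atBot (𝓝 (η (⋂ x : ℝ, Iic x))) :=
    tendsto_measure_iInter_atBot (fun _ => (measurableSet_Iic).nullMeasurableSet)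
      (fun a b hab => Iic_subset_Iic.mpr hab) ⟨0, measure_ne_top _ _⟩
  have he : (⋂ x : ℝ, Iic x) = (∅ : Set ℝ) := by
    ext y; simp only [mem_iInter, mem_Iic, mem_empty_iff_false, iff_false, not_forall, not_le]
    exact ⟨y - 1, by linarith⟩
  rw [he, measure_empty] at h
  exact (by simpa using (ENNReal.tendsto_toReal (by simp)).comp h :
    Tendsto (ENNReal.toReal ∘ fun x => η (Iic x)) atBot (𝓝 0))

lemma bddBelow_quant_set {u : ℝ} (hu : 0 < u) : BddBelow {k : ℝ | u ≤ cdf η k} := by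
  obtain ⟨b, hb⟩ : ∃ b : ℝ, cdf η b < u := by
    have := tendsto_cdf_atBot η
    have := this.eventually (eventually_lt_nhds hu)  -- cdf η x < u eventually atBot
    exact (this.exists)
  exact ⟨b, fun k hk => le_of_not_gt fun hkb => absurd (le_trans hk (cdf_mono η hkb.le)) (not_le.mpr hb)⟩

lemma quant_set_nonempty {u : ℝ} (hu : u < mmass η) : {k : ℝ | u ≤ cdf η k}.Nonempty := by
  have := (tendsto_cdf_atTop η).eventually (eventually_gt_nhds hu)
  obtain ⟨b, hb⟩ := this.exists
  exact ⟨b, hb.le⟩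

lemma le_cdf_right {u x : ℝ} (h : ∀ ε : ℝ, 0 < ε → u ≤ cdf η (x + ε)) : u ≤ cdf η x := by
  have hseq : Tendsto (fun n : ℕ => cdf η (x + 1 / (n + 1))) atTop (𝓝 (cdf η x)) := by
    have h1 : Tendsto (fun n : ℕ => η (Iic (x + 1 / (n + 1)))) atTop (𝓝 (η (⋂ n : ℕ, Iic (x + 1 / (n + 1))))) := by
      refine tendsto_measure_iInter_atTop (fun _ => measurableSet_Iic.nullMeasurableSet)
        (fun a b hab => Iic_subset_Iic.mpr ?_) ⟨0, measure_ne_top _ _⟩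
      have : (1 : ℝ) / (b + 1) ≤ 1 / (a + 1) := by
        apply one_div_le_one_div_of_le (by positivity)
        exact_mod_cast add_le_add_left (Nat.cast_le.mpr hab) 1
      linarith
    have he : (⋂ n : ℕ, Iic (x + 1 / ((n : ℝ) + 1))) = Iic x := by
      ext y; simp only [mem_iInter, mem_Iic]
      constructor
      · intro h
        by_contra hxy
        push_neg at hxy
        obtain ⟨n, hn⟩ := exists_nat_one_div_lt (sub_pos.mpr hxy)
        exact absurd (h n) (by push_neg; linarith)
      · intro h n
        have : (0:ℝ) < 1 / (n + 1) := by positivity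
        linarith
    rw [he] at h1
    exact (ENNReal.tendsto_toReal (measure_ne_top _ _)).comp h1
  exact ge_of_tendsto hseq (Eventually.of_forall fun n => h _ (by positivity))

lemma quant_le_iff {u x : ℝ} (hu : 0 < u) (hum : u < mmass η) :
    quant η u ≤ x ↔ u ≤ cdf η x := by
  constructor
  · intro h
    refine le_cdf_right η fun ε hε => ?_
    obtain ⟨k, hk, hkx⟩ := exists_lt_of_csInf_lt (quant_set_nonempty η hum)
      (lt_of_le_of_lt h (by linarith : x < x + ε))
    exact le_trans hk (cdf_mono η hkx.le)
  · intro h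
    exact csInf_le (bddBelow_quant_set η hu) h

lemma quant_monotoneOn : MonotoneOn (quant η) (Ioo 0 (mmass η)) := by
  intro a ha b hb hab
  refine le_csInf (quant_set_nonempty η hb.2) fun k hk => ?_
  exact csInf_le (bddBelow_quant_set η ha.1) (le_trans hab hk)

end lems

section main
variable (η : Measure ℝ) [IsFiniteMeasure η]

lemma aemeas_quant : AEMeasurable (quant η) (volume.restrict (Icc 0 (mmass η))) := by
  rw [Measure.restrict_congr_set (Ioo_ae_eq_Icc).symm]
  exact aemeasurable_restrict_of_monotoneOn measurableSet_Ioo (quant_monotoneOn η)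

lemma map_quant : (volume.restrict (Icc 0 (mmass η))).map (quant η) = η := by
  have hae := aemeas_quant η
  refine (Measure.ext_of_Iic η _ fun x => ?_).symm
  rw [Measure.map_apply_of_aemeasurable hae measurableSet_Iic,
    Measure.restrict_congr_set (Ioo_ae_eq_Icc).symm,
    Measure.restrict_apply' measurableSet_Ioo]
  have hset : quant η ⁻¹' Iic x ∩ Ioo 0 (mmass η) = Ioo 0 (mmass η) ∩ Iic (cdf η x) := by
    ext u
    simp only [mem_inter_iff, mem_preimage, mem_Iic, mem_Ioo]
    constructor
    · rintro ⟨h, hu⟩; exact ⟨hu, (quant_le_iff η hu.1 hu.2).mp h⟩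
    · rintro ⟨hu, h⟩; exact ⟨(quant_le_iff η hu.1 hu.2).mpr h, hu⟩
  rw [hset]
  have hc0 := cdf_nonneg η x
  have hcm := cdf_le_mmass η x
  rcases lt_or_eq_of_le hcm with hlt | heq
  · have : Ioo 0 (mmass η) ∩ Iic (cdf η x) = Ioc 0 (cdf η x) := by
      ext u
      simp only [mem_inter_iff, mem_Ioo, mem_Iic, mem_Ioc]
      exact ⟨fun ⟨⟨h1, _⟩, h3⟩ => ⟨h1, h3⟩, fun ⟨h1, h2⟩ => ⟨⟨h1, lt_of_le_of_lt h2 hlt⟩, h2⟩⟩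
    rw [this, Real.volume_Ioc, sub_zero, ← ENNReal.ofReal_toReal (measure_ne_top η (Iic x))]
    rfl
  · have : Ioo 0 (mmass η) ∩ Iic (cdf η x) = Ioo 0 (mmass η) := by
      rw [inter_eq_left]
      intro u hu
      exact le_of_lt (heq ▸ hu.2)
    rw [this, Real.volume_Ioo, sub_zero, ← heq,
      ← ENNReal.ofReal_toReal (measure_ne_top η (Iic x))]
    rfl

end main

noncomputable def downM (η η' : Measure ℝ) : Measure ℝ :=
  (volume.restrict (Set.Icc 0 (mmass η))).map fun u => min (quant η u) (quant η' u)

def le_pcd (η χ : Measure ℝ) : Prop :=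
  ∀ f : ℝ → ℝ, (∀ x, 0 ≤ f x) → ConvexOn ℝ Set.univ f → Antitone f →
    Integrable f η → Integrable f χ → ∫ x, f x ∂η ≤ ∫ x, f x ∂χ

theorem le_pcd_down (μ η η' : Measure ℝ)
    [IsFiniteMeasure μ] [IsFiniteMeasure η] [IsFiniteMeasure η']
    (hμ : Integrable (fun x => x) μ)
    (hη : Integrable (fun x => x) η) (hη' : Integrable (fun x => x) η')
    (hmass : η Set.univ = η' Set.univ)
    (h1 : le_pcd μ η) (h2 : le_pcd μ η') :
    le_pcd μ (downM η η') := by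
  intro f hf0 hconv hant hfμ hfν
  set m := mmass η with hm
  have hmm' : mmass η' = mmass η := by unfold mmass; rw [hmass]
  set σ := volume.restrict (Icc 0 m) with hσ
  set g : ℝ → ℝ := fun u => min (quant η u) (quant η' u) with hg
  have hfm : Measurable f := hant.measurable
  have hq : AEMeasurable (quant η) σ := aemeas_quant η
  have hq' : AEMeasurable (quant η') σ := by
    have := aemeas_quant η'
    rwa [hmm'] at this
  have hgm : AEMeasurable g σ := hq.min hq'
  have hνeq : downM η η' = σ.map g := rfl
  have hfg_int : Integrable (fun u => f (g u)) σ :=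
    (integrable_map_measure hfm.aestronglyMeasurable hgm).mp (hνeq ▸ hfν)
  have hle : ∀ u, f (quant η u) ≤ f (g u) := fun u => hant (min_le_left _ _)
  have hfq_meas : AEStronglyMeasurable (fun u => f (quant η u)) σ :=
    (hfm.comp_aemeasurable hq).aestronglyMeasurable
  have hfq_int : Integrable (fun u => f (quant η u)) σ :=
    hfg_int.mono' hfq_meas (Filter.Eventually.of_forall fun u => by
      rw [Real.norm_eq_abs, abs_of_nonneg (hf0 _)]; exact hle u)
  have hηint : Integrable f η := by
    rw [← map_quant η]
    exact (integrable_map_measure hfm.aestronglyMeasurable hq).mpr hfq_int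
  have h₁ : ∫ x, f x ∂μ ≤ ∫ x, f x ∂η := h1 f hf0 hconv hant hfμ hηint
  have h₂ : ∫ x, f x ∂η = ∫ u, f (quant η u) ∂σ := by
    conv_lhs => rw [← map_quant η]
    exact integral_map hq hfm.aestronglyMeasurable
  have h₃ : ∫ u, f (quant η u) ∂σ ≤ ∫ u, f (g u) ∂σ :=
    integral_mono hfq_int hfg_int hle
  have h₄ : ∫ x, f x ∂(downM η η') = ∫ u, f (g u) ∂σ := by
    rw [hνeq]
    exact integral_map hgm hfm.aestronglyMeasurable
  linarith
end

section
/- If f_n : ℝ → ℝ is a sequence of functions decreasing pointwise to f : ℝ → ℝ, then the convex hulls f_n^c decrease pointwise to f^c, i.e., lim_n f_n^c(k) = f^c(k) for every k ∈ ℝ. -/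
/-!
Every `convHullFn (f n)` is convex, and these hulls decrease in `n` and stay above a convex
minorant `φ` of the limit, so they converge pointwise to some `g`. As a pointwise limit of
convex functions `g` is convex, and `g ≤ flim`, so `g ≤ convHullFn flim`; conversely
`convHullFn flim ≤ convHullFn (f n)` for every `n` by monotonicity, so `g = convHullFn flim`.
-/

open MeasureTheory Set

/-- The convex hull of a function: the largest convex function below it. -/
noncomputable def convHullFn (h : ℝ → ℝ) : ℝ → ℝ := fun x =>
  sSup {y : ℝ | ∃ g : ℝ → ℝ, ConvexOn ℝ Set.univ g ∧ (∀ z, g z ≤ h z) ∧ y = g x}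

open Filter Topology

theorem ConvexOn.of_tendsto {ι E : Type*} [AddCommMonoid E] [SMul ℝ E] {l : Filter ι}
    [l.NeBot] {s : Set E} {F : ι → E → ℝ} {g : E → ℝ} (hF : ∀ᶠ i in l, ConvexOn ℝ s (F i))
    (hg : ∀ x ∈ s, Tendsto (fun i => F i x) l (𝓝 (g x))) : ConvexOn ℝ s g := by
  obtain ⟨i, hi⟩ := hF.exists
  refine ⟨hi.1, fun x hx y hy a b ha hb hab => ?_⟩
  refine le_of_tendsto_of_tendsto (hg _ (hi.1 hx hy ha hb hab))
    (((hg x hx).const_smul a).add ((hg y hy).const_smul b)) ?_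
  filter_upwards [hF] with j hj using hj.2 hx hy ha hb hab

section convHullFn

variable {h h' φ : ℝ → ℝ}

theorem convHullFn_bddAbove (h : ℝ → ℝ) (x : ℝ) :
    BddAbove {y : ℝ | ∃ g : ℝ → ℝ, ConvexOn ℝ univ g ∧ (∀ z, g z ≤ h z) ∧ y = g x} :=
  ⟨h x, by rintro _ ⟨g, _, hgh, rfl⟩; exact hgh x⟩

theorem le_convHullFn (hφ : ConvexOn ℝ univ φ) (hφh : ∀ z, φ z ≤ h z) (x : ℝ) :
    φ x ≤ convHullFn h x :=
  le_csSup (convHullFn_bddAbove h x) ⟨φ, hφ, hφh, rfl⟩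

theorem convHullFn_le_self (hφ : ConvexOn ℝ univ φ) (hφh : ∀ z, φ z ≤ h z) (x : ℝ) :
    convHullFn h x ≤ h x :=
  csSup_le ⟨φ x, φ, hφ, hφh, rfl⟩ (by rintro _ ⟨g, _, hgh, rfl⟩; exact hgh x)

theorem convHullFn_mono (hφ : ConvexOn ℝ univ φ) (hφh : ∀ z, φ z ≤ h z)
    (hh' : ∀ z, h z ≤ h' z) (x : ℝ) : convHullFn h x ≤ convHullFn h' x :=
  csSup_le ⟨φ x, φ, hφ, hφh, rfl⟩ <| by
    rintro _ ⟨g, hg, hgh, rfl⟩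
    exact le_convHullFn hg (fun z => (hgh z).trans (hh' z)) x

theorem convexOn_convHullFn (hφ : ConvexOn ℝ univ φ) (hφh : ∀ z, φ z ≤ h z) :
    ConvexOn ℝ univ (convHullFn h) := by
  refine ⟨convex_univ, fun x _ y _ a b ha hb hab =>
    csSup_le ⟨φ _, φ, hφ, hφh, rfl⟩ ?_⟩
  rintro _ ⟨g, hg, hgh, rfl⟩
  calc g (a • x + b • y) ≤ a • g x + b • g y := hg.2 trivial trivial ha hb hab
    _ ≤ a • convHullFn h x + b • convHullFn h y := by
      gcongr <;> exact le_convHullFn hg hgh _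

end convHullFn

theorem convHull_of_decreasing_limit (f : ℕ → ℝ → ℝ) (flim : ℝ → ℝ)
    (hmono : ∀ x : ℝ, Antitone fun n => f n x)
    (hlim : ∀ x : ℝ, Filter.Tendsto (fun n => f n x) Filter.atTop (nhds (flim x)))
    (hmin : ∃ φ : ℝ → ℝ, ConvexOn ℝ Set.univ φ ∧ ∀ z, φ z ≤ flim z) :
    ∀ k : ℝ, Filter.Tendsto (fun n => convHullFn (f n) k) Filter.atTop
      (nhds (convHullFn flim k)) := by
  obtain ⟨φ, hφ, hφflim⟩ := hmin
  have hflim_le : ∀ n x, flim x ≤ f n x := fun n x => (hmono x).le_of_tendsto (hlim x) n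
  have hφf : ∀ n z, φ z ≤ f n z := fun n z => (hφflim z).trans (hflim_le n z)
  have hbdd : ∀ x, BddBelow (range fun n => convHullFn (f n) x) := fun x =>
    ⟨φ x, by rintro _ ⟨n, rfl⟩; exact le_convHullFn hφ (hφf n) x⟩
  set g : ℝ → ℝ := fun x => ⨅ n, convHullFn (f n) x
  have htend : ∀ x, Tendsto (fun n => convHullFn (f n) x) atTop (𝓝 (g x)) := fun x =>
    tendsto_atTop_ciInf (fun _ _ hnm => convHullFn_mono hφ (hφf _) (fun z => hmono z hnm) x)
      (hbdd x)
  have hg : ConvexOn ℝ univ g :=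
    .of_tendsto (.of_forall fun n => convexOn_convHullFn hφ (hφf n)) fun x _ => htend x
  have hg_le : ∀ z, g z ≤ flim z := fun z =>
    le_of_tendsto_of_tendsto' (htend z) (hlim z) fun n => convHullFn_le_self hφ (hφf n) z
  intro k
  convert htend k using 2
  exact le_antisymm
    (ge_of_tendsto' (htend k) fun n => convHullFn_mono hφ hφflim (hflim_le n) k)
    (le_convHullFn hg hg_le k)
end

section
/- The function u ↦ c(u) := sup_{k∈ℝ}(C_{μ̂_{[0,u]}}(k) − C_ν(k)) associated to a lift μ̂ ∈ Π(λ, μ) of μ with μ ≤_cd ν is non-decreasing and continuous on [0,1], where μ̂_{[0,u]} denotes the first-coordinate restriction μ̂([0,u] × ·). -/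
open MeasureTheory Set

noncomputable def call (η : Measure ℝ) (k : ℝ) : ℝ := ∫ x, max (x - k) 0 ∂η

def le_cd (η χ : Measure ℝ) : Prop :=
  ∀ f : ℝ → ℝ, ConvexOn ℝ Set.univ f → Antitone f →
    Integrable f η → Integrable f χ → ∫ x, f x ∂η ≤ ∫ x, f x ∂χ

/-- `μ̂_{[0,u]}`: the second-marginal of the lift restricted to first coordinate in `[0,u]`. -/
noncomputable def liftRestrict (μhat : Measure (ℝ × ℝ)) (u : ℝ) : Measure ℝ :=
  (μhat.restrict ((Set.Icc 0 u) ×ˢ (Set.univ : Set ℝ))).map Prod.snd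

open Filter
open scoped ENNReal NNReal

noncomputable def put (η : Measure ℝ) (k : ℝ) : ℝ := ∫ x, max (k - x) 0 ∂η

noncomputable def strip (μhat : Measure (ℝ × ℝ)) (a b : ℝ) : Measure ℝ :=
  (μhat.restrict ((Set.Ioc a b) ×ˢ (Set.univ : Set ℝ))).map Prod.snd

instance liftRestrict.instFin (μhat : Measure (ℝ × ℝ)) [IsFiniteMeasure μhat] (u : ℝ) :
    IsFiniteMeasure (liftRestrict μhat u) := by
  unfold liftRestrict; infer_instance

instance strip.instFin (μhat : Measure (ℝ × ℝ)) [IsFiniteMeasure μhat] (a b : ℝ) :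
    IsFiniteMeasure (strip μhat a b) := by
  unfold strip; infer_instance

lemma integrable_callFn {η : Measure ℝ} [IsFiniteMeasure η]
    (h : Integrable (fun x => x) η) (k : ℝ) :
    Integrable (fun x => max (x - k) 0) η :=
  (h.sub (integrable_const k)).pos_part

lemma integrable_putFn {η : Measure ℝ} [IsFiniteMeasure η]
    (h : Integrable (fun x => x) η) (k : ℝ) :
    Integrable (fun x => max (k - x) 0) η :=
  ((integrable_const k).sub h).pos_part

lemma convexOn_putFn (k : ℝ) : ConvexOn ℝ Set.univ (fun x : ℝ => max (k - x) 0) := by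
  have h1 : ConvexOn ℝ (Set.univ : Set ℝ) (fun x : ℝ => k - x) := by
    have : ConvexOn ℝ (Set.univ : Set ℝ) (fun x : ℝ => -x) :=
      (concaveOn_id convex_univ).neg
    have h2 := this.add (convexOn_const k convex_univ)
    convert h2 using 2 with x
    · rfl
    · simp only [Pi.add_apply]; ring
  exact h1.sup (convexOn_const 0 convex_univ)

lemma antitone_putFn (k : ℝ) : Antitone (fun x : ℝ => max (k - x) 0) := by
  intro a b hab
  exact max_le_max (by linarith) le_rfl

lemma convexOn_negid : ConvexOn ℝ (Set.univ : Set ℝ) (fun x : ℝ => -x) :=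
  (concaveOn_id convex_univ).neg

lemma antitone_negid : Antitone (fun x : ℝ => -x) := fun a b h => by simpa using h

lemma liftRestrict_le (μhat : Measure (ℝ × ℝ)) (u : ℝ) :
    liftRestrict μhat u ≤ μhat.map Prod.snd :=
  Measure.map_mono Measure.restrict_le_self measurable_snd

lemma strip_le (μhat : Measure (ℝ × ℝ)) (a b : ℝ) :
    strip μhat a b ≤ μhat.map Prod.snd :=
  Measure.map_mono Measure.restrict_le_self measurable_snd

lemma liftRestrict_mono (μhat : Measure (ℝ × ℝ)) {a b : ℝ} (h : a ≤ b) :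
    liftRestrict μhat a ≤ liftRestrict μhat b :=
  Measure.map_mono
    (Measure.restrict_mono (Set.prod_mono (Set.Icc_subset_Icc_right h) le_rfl) le_rfl)
    measurable_snd

lemma liftRestrict_split (μhat : Measure (ℝ × ℝ)) {a b : ℝ} (h0 : 0 ≤ a) (hab : a ≤ b) :
    liftRestrict μhat b = liftRestrict μhat a + strip μhat a b := by
  have hset : (Set.Icc (0:ℝ) b) ×ˢ (Set.univ : Set ℝ)
      = ((Set.Icc (0:ℝ) a) ×ˢ (Set.univ : Set ℝ)) ∪ ((Set.Ioc a b) ×ˢ (Set.univ : Set ℝ)) := by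
    rw [← Set.union_prod]
    congr 1
    rw [Set.Icc_union_Ioc_eq_Icc h0 hab]
  have hdisj : Disjoint ((Set.Icc (0:ℝ) a) ×ˢ (Set.univ : Set ℝ))
      ((Set.Ioc a b) ×ˢ (Set.univ : Set ℝ)) := by
    apply Set.disjoint_prod.2
    left
    exact (Set.Iic_disjoint_Ioc le_rfl).mono Set.Icc_subset_Iic_self le_rfl
  have hmeas : MeasurableSet ((Set.Ioc a b) ×ˢ (Set.univ : Set ℝ)) :=
    measurableSet_Ioc.prod MeasurableSet.univ
  rw [liftRestrict, hset, Measure.restrict_union hdisj hmeas, Measure.map_add _ _ measurable_snd]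
  rfl

lemma liftRestrict_mass (μhat : Measure (ℝ × ℝ)) [IsProbabilityMeasure μhat]
    (hfst : μhat.map Prod.fst = volume.restrict (Set.Icc (0 : ℝ) 1))
    {u : ℝ} (h0 : 0 ≤ u) (h1 : u ≤ 1) :
    liftRestrict μhat u Set.univ = ENNReal.ofReal u := by
  rw [liftRestrict, Measure.map_apply measurable_snd MeasurableSet.univ,
    Set.preimage_univ, Measure.restrict_apply MeasurableSet.univ, Set.univ_inter,
    Set.prod_univ, ← Measure.map_apply measurable_fst measurableSet_Icc, hfst,
    Measure.restrict_apply measurableSet_Icc,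
    Set.inter_eq_self_of_subset_left (Set.Icc_subset_Icc le_rfl h1),
    Real.volume_Icc]
  simp

lemma strip_mass (μhat : Measure (ℝ × ℝ)) [IsProbabilityMeasure μhat]
    (hfst : μhat.map Prod.fst = volume.restrict (Set.Icc (0 : ℝ) 1))
    {a b : ℝ} (h0 : 0 ≤ a) (hab : a ≤ b) (h1 : b ≤ 1) :
    strip μhat a b Set.univ = ENNReal.ofReal (b - a) := by
  rw [strip, Measure.map_apply measurable_snd MeasurableSet.univ,
    Set.preimage_univ, Measure.restrict_apply MeasurableSet.univ, Set.univ_inter,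
    Set.prod_univ, ← Measure.map_apply measurable_fst measurableSet_Ioc, hfst,
    Measure.restrict_apply measurableSet_Ioc,
    Set.inter_eq_self_of_subset_left (Set.Ioc_subset_Icc_self.trans (Set.Icc_subset_Icc h0 h1)),
    Real.volume_Ioc]

lemma call_nonneg (η : Measure ℝ) (k : ℝ) : 0 ≤ call η k :=
  integral_nonneg fun _ => le_max_right _ _

lemma put_nonneg (η : Measure ℝ) (k : ℝ) : 0 ≤ put η k :=
  integral_nonneg fun _ => le_max_right _ _

lemma call_mono_measure {k : ℝ} {η η' : Measure ℝ} (hle : η ≤ η')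
    (h : Integrable (fun x => max (x - k) 0) η') : call η k ≤ call η' k :=
  integral_mono_measure hle (ae_of_all _ fun _ => le_max_right _ _) h

lemma put_mono_measure {k : ℝ} {η η' : Measure ℝ} (hle : η ≤ η')
    (h : Integrable (fun x => max (k - x) 0) η') : put η k ≤ put η' k :=
  integral_mono_measure hle (ae_of_all _ fun _ => le_max_right _ _) h

lemma call_eq_put (η : Measure ℝ) [IsFiniteMeasure η]
    (h : Integrable (fun x => x) η) (k : ℝ) :
    call η k = put η k + ∫ x, x ∂η - k * (η Set.univ).toReal := by
  have hpt : ∀ x : ℝ, max (x - k) 0 = max (k - x) 0 + (x - k) := by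
    intro x
    rcases le_total k x with hx | hx
    · rw [max_eq_left (by linarith), max_eq_right (by linarith)]; ring
    · rw [max_eq_right (by linarith), max_eq_left (by linarith)]; ring
  have hsub : Integrable (fun x : ℝ => x - k) η := h.sub (integrable_const k)
  rw [call, integral_congr_ae (ae_of_all _ hpt),
    integral_add (integrable_putFn h k) hsub,
    integral_sub h (integrable_const k), integral_const]
  rw [put]
  ring_nf
  unfold Measure.real
  ring

lemma call_add_measure (η σ : Measure ℝ) [IsFiniteMeasure η] [IsFiniteMeasure σ]
    (hη : Integrable (fun x => x) η) (hσ : Integrable (fun x => x) σ) (k : ℝ) :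
    call (η + σ) k = call η k + call σ k :=
  integral_add_measure (integrable_callFn hη k) (integrable_callFn hσ k)

lemma put_tendsto_zero (ν : Measure ℝ) [IsProbabilityMeasure ν]
    (hν : Integrable (fun x => x) ν) :
    Tendsto (fun n : ℕ => put ν (-(n : ℝ))) atTop (nhds 0) := by
  have h0 : (0 : ℝ) = ∫ x, (0 : ℝ) ∂ν := by simp
  rw [h0]
  apply tendsto_integral_of_dominated_convergence (fun x => |x|)
  · intro n
    exact ((measurable_const.sub measurable_id).max measurable_const).aestronglyMeasurable
  · exact hν.abs
  · intro n
    filter_upwards with x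
    rw [Real.norm_eq_abs, abs_of_nonneg (le_max_right _ _)]
    rcases le_total (-(n : ℝ) - x) 0 with h | h
    · rw [max_eq_right h]; positivity
    · rw [max_eq_left h]
      have : (0:ℝ) ≤ (n:ℝ) := Nat.cast_nonneg n
      rcases abs_cases x with ⟨h1, _⟩ | ⟨h1, _⟩ <;> linarith
  · filter_upwards with x
    obtain ⟨N, hN⟩ := exists_nat_ge (-x)
    apply Tendsto.congr' _ tendsto_const_nhds
    filter_upwards [eventually_ge_atTop N] with n hn
    have : -(n : ℝ) - x ≤ 0 := by
      have : (N : ℝ) ≤ (n : ℝ) := Nat.cast_le.2 hn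
      linarith
    simp [max_eq_right this]

lemma continuousOn_of_modulus {f : ℝ → ℝ} {s : Set ℝ}
    (h : ∀ ε > (0:ℝ), ∃ δ > (0:ℝ), ∀ a ∈ s, ∀ b ∈ s, |a - b| < δ → |f a - f b| ≤ ε) :
    ContinuousOn f s := by
  intro u hu
  rw [Metric.continuousWithinAt_iff]
  intro ε hε
  obtain ⟨δ, hδ, H⟩ := h (ε / 2) (by linarith)
  refine ⟨δ, hδ, fun {x} hx hdist => ?_⟩
  have := H x hx u hu (by simpa [Real.dist_eq] using hdist)
  rw [Real.dist_eq]
  calc |f x - f u| ≤ ε / 2 := this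
    _ < ε := by linarith

theorem c_monotone_continuous (μ ν : Measure ℝ) (μhat : Measure (ℝ × ℝ))
    [IsProbabilityMeasure μ] [IsProbabilityMeasure ν] [IsProbabilityMeasure μhat]
    (hμ : Integrable (fun x => x) μ) (hν : Integrable (fun x => x) ν)
    (hcd : le_cd μ ν)
    (hfst : μhat.map Prod.fst = volume.restrict (Set.Icc (0 : ℝ) 1))
    (hsnd : μhat.map Prod.snd = μ) :
    MonotoneOn (fun u : ℝ =>
        sSup {d : ℝ | ∃ k : ℝ, d = call (liftRestrict μhat u) k - call ν k})
      (Set.Icc (0 : ℝ) 1) ∧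
    ContinuousOn (fun u : ℝ =>
        sSup {d : ℝ | ∃ k : ℝ, d = call (liftRestrict μhat u) k - call ν k})
      (Set.Icc (0 : ℝ) 1) := by
  classical
  set S : ℝ → Set ℝ :=
    fun u => {d : ℝ | ∃ k : ℝ, d = call (liftRestrict μhat u) k - call ν k} with hSdef
  set c : ℝ → ℝ := fun u => sSup (S u) with hcdef
  -- basic facts
  have hle : ∀ u : ℝ, liftRestrict μhat u ≤ μ := fun u => hsnd ▸ liftRestrict_le μhat u
  have hsle : ∀ a b : ℝ, strip μhat a b ≤ μ := fun a b => hsnd ▸ strip_le μhat a b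
  have hIη : ∀ u : ℝ, Integrable (fun x => x) (liftRestrict μhat u) :=
    fun u => hμ.mono_measure (hle u)
  have hIσ : ∀ a b : ℝ, Integrable (fun x => x) (strip μhat a b) :=
    fun a b => hμ.mono_measure (hsle a b)
  have hput : ∀ k : ℝ, put μ k ≤ put ν k := fun k =>
    hcd _ (convexOn_putFn k) (antitone_putFn k) (integrable_putFn hμ k) (integrable_putFn hν k)
  have hmean : ∫ x, x ∂ν ≤ ∫ x, x ∂μ := by
    have := hcd _ convexOn_negid antitone_negid hμ.neg hν.neg
    rw [integral_neg, integral_neg] at this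
    linarith
  set m : ℝ := ∫ x, x ∂μ - ∫ x, x ∂ν with hm
  have hub : ∀ u k : ℝ, call (liftRestrict μhat u) k - call ν k ≤ m := by
    intro u k
    have h1 : call (liftRestrict μhat u) k ≤ call μ k :=
      call_mono_measure (hle u) (integrable_callFn hμ k)
    have h2 : call μ k - call ν k ≤ m := by
      rw [call_eq_put μ hμ k, call_eq_put ν hν k, measure_univ, measure_univ]
      have := hput k
      simp only [ENNReal.toReal_one]
      linarith
    linarith
  have hbdd : ∀ u : ℝ, BddAbove (S u) := fun u =>
    ⟨m, fun d hd => by obtain ⟨k, hk⟩ := hd; exact hk ▸ hub u k⟩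
  have hne : ∀ u : ℝ, (S u).Nonempty := fun u => ⟨_, 0, rfl⟩
  -- monotonicity
  have hmono : ∀ a b : ℝ, a ≤ b → c a ≤ c b := by
    intro a b hab
    apply csSup_le (hne a)
    rintro d ⟨k, rfl⟩
    have h1 : call (liftRestrict μhat a) k ≤ call (liftRestrict μhat b) k :=
      call_mono_measure (liftRestrict_mono μhat hab)
        ((integrable_callFn hμ k).mono_measure (hle b))
    calc call (liftRestrict μhat a) k - call ν k
        ≤ call (liftRestrict μhat b) k - call ν k := by linarith
      _ ≤ c b := le_csSup (hbdd b) ⟨k, rfl⟩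
  constructor
  · exact fun a _ b _ hab => hmono a b hab
  -- continuity
  apply continuousOn_of_modulus
  intro ε hε
  -- choose R
  have hR0 : ∃ n : ℕ, 1 ≤ n ∧ put ν (-(n : ℝ)) < ε / 3 := by
    have h1 := (put_tendsto_zero ν hν).eventually_lt_const (show (0:ℝ) < ε / 3 by linarith)
    obtain ⟨n, hn1, hn2⟩ := (eventually_ge_atTop 1).and h1 |>.exists
    exact ⟨n, hn1, hn2⟩
  obtain ⟨n, hn1, hputR⟩ := hR0
  set R : ℝ := (n : ℝ) with hRdef
  have hR1 : 1 ≤ R := by rw [hRdef]; exact_mod_cast hn1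
  have hRpos : 0 < R := by linarith
  -- absolute continuity of x ↦ |x| against μhat
  have hI2 : Integrable (fun p : ℝ × ℝ => p.2) μhat := by
    rw [← hsnd] at hμ
    exact (integrable_map_measure measurable_id.aestronglyMeasurable
      measurable_snd.aemeasurable).1 hμ
  have hlint : ∫⁻ p, ENNReal.ofReal |p.2| ∂μhat ≠ ⊤ := by
    have h := hI2.abs.2
    rw [HasFiniteIntegral] at h
    simp only [Real.enorm_abs] at h
    have heq : ∀ p : ℝ × ℝ, ENNReal.ofReal |p.2| = (‖p.2‖₊ : ℝ≥0∞) :=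
      fun p => (Real.enorm_eq_ofReal_abs _).symm
    rw [lintegral_congr heq]
    exact h.ne
  obtain ⟨δ, hδpos, hδ⟩ := exists_pos_setLIntegral_lt_of_measure_lt hlint
    (show ENNReal.ofReal (ε / 3) ≠ 0 by
      simp [ENNReal.ofReal_eq_zero]; linarith)
  set δ' : ℝ≥0∞ := min δ 1 with hδ'def
  have hδ'pos : 0 < δ'.toReal := by
    rw [ENNReal.toReal_pos_iff]
    constructor
    · exact lt_min hδpos zero_lt_one
    · exact lt_of_le_of_lt (min_le_right _ _) ENNReal.one_lt_top
  set δfin : ℝ := min δ'.toReal (ε / (3 * R)) with hδfin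
  have hδfinpos : 0 < δfin := lt_min hδ'pos (by positivity)
  refine ⟨δfin, hδfinpos, ?_⟩
  -- key estimate : for a ≤ b in [0,1] with b - a < δfin, c b - c a ≤ ε
  have key : ∀ a ∈ Set.Icc (0:ℝ) 1, ∀ b ∈ Set.Icc (0:ℝ) 1, a ≤ b → b - a < δfin →
      c b - c a ≤ ε := by
    intro a ha b hb hab hsmall
    set σ : Measure ℝ := strip μhat a b with hσdef
    set Δ : ℝ := ∫ x, |x| ∂σ with hΔdef
    have hIσ' := hIσ a b
    have hσmass : σ Set.univ = ENNReal.ofReal (b - a) := strip_mass μhat hfst ha.1 hab hb.2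
    have hσmassR : (σ Set.univ).toReal = b - a := by
      rw [hσmass, ENNReal.toReal_ofReal (by linarith)]
    -- Δ < ε / 3
    have hΔ : Δ < ε / 3 := by
      have hset : MeasurableSet ((Set.Ioc a b) ×ˢ (Set.univ : Set ℝ)) :=
        measurableSet_Ioc.prod MeasurableSet.univ
      have h1 : Δ = ∫ p in (Set.Ioc a b) ×ˢ (Set.univ : Set ℝ), |p.2| ∂μhat := by
        rw [hΔdef, hσdef, strip]
        exact integral_map measurable_snd.aemeasurable
          measurable_id.abs.aestronglyMeasurable
      have hμs : μhat ((Set.Ioc a b) ×ˢ (Set.univ : Set ℝ)) < δ := by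
        have : μhat ((Set.Ioc a b) ×ˢ (Set.univ : Set ℝ)) = ENNReal.ofReal (b - a) := by
          have := strip_mass μhat hfst ha.1 hab hb.2
          rw [strip, Measure.map_apply measurable_snd MeasurableSet.univ,
            Set.preimage_univ, Measure.restrict_apply MeasurableSet.univ,
            Set.univ_inter] at this
          exact this
        rw [this]
        calc ENNReal.ofReal (b - a) < ENNReal.ofReal δ'.toReal := by
              rw [ENNReal.ofReal_lt_ofReal_iff hδ'pos]
              exact lt_of_lt_of_le hsmall (min_le_left _ _)
          _ ≤ δ' := ENNReal.ofReal_toReal_le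
          _ ≤ δ := min_le_left _ _
      have h2 := hδ _ hμs
      have h3 : ∫ p in (Set.Ioc a b) ×ˢ (Set.univ : Set ℝ), |p.2| ∂μhat
          = (∫⁻ p in (Set.Ioc a b) ×ˢ (Set.univ : Set ℝ), ENNReal.ofReal |p.2| ∂μhat).toReal := by
        rw [integral_eq_lintegral_of_nonneg_ae (ae_of_all _ fun p => abs_nonneg _)
          measurable_snd.abs.aestronglyMeasurable.restrict]
      rw [h1, h3]
      exact ENNReal.toReal_lt_of_lt_ofReal h2
    -- relations of means
    have hsplit : liftRestrict μhat b = liftRestrict μhat a + σ :=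
      liftRestrict_split μhat ha.1 hab
    have hMab : ∫ x, x ∂(liftRestrict μhat b)
        = ∫ x, x ∂(liftRestrict μhat a) + ∫ x, x ∂σ := by
      rw [hsplit]; exact integral_add_measure (hIη a) hIσ'
    have hMσ : ∫ x, x ∂σ ≤ Δ := by
      calc ∫ x, x ∂σ ≤ |∫ x, x ∂σ| := le_abs_self _
        _ ≤ ∫ x, |x| ∂σ := by
            simpa [Real.norm_eq_abs] using norm_integral_le_integral_norm (μ := σ) (f := fun x : ℝ => x)
    -- masses
    have hmassa : (liftRestrict μhat a Set.univ).toReal = a := by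
      rw [liftRestrict_mass μhat hfst ha.1 ha.2, ENNReal.toReal_ofReal ha.1]
    have hmassb : (liftRestrict μhat b Set.univ).toReal = b := by
      rw [liftRestrict_mass μhat hfst hb.1 hb.2, ENNReal.toReal_ofReal hb.1]
    -- per-k estimate
    have perk : ∀ k : ℝ, call (liftRestrict μhat b) k - call ν k
        ≤ c a + (put ν (-R) + Δ + R * (b - a)) := by
      intro k
      rcases le_or_gt (-R) k with hk | hk
      · -- k ≥ -R
        have hsplitc : call (liftRestrict μhat b) k
            = call (liftRestrict μhat a) k + call σ k := by
          rw [hsplit]; exact call_add_measure _ _ (hIη a) hIσ' k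
        have hca : call (liftRestrict μhat a) k - call ν k ≤ c a :=
          le_csSup (hbdd a) ⟨k, rfl⟩
        have hcσ : call σ k ≤ Δ + R * (b - a) := by
          have hmono' : ∀ x : ℝ, max (x - k) 0 ≤ |x| + R := by
            intro x
            rcases le_total (x - k) 0 with h | h
            · rw [max_eq_right h]; positivity
            · rw [max_eq_left h]
              rcases abs_cases x with ⟨h1, _⟩ | ⟨h1, _⟩ <;> linarith
          calc call σ k ≤ ∫ x, (|x| + R) ∂σ := by
                apply integral_mono (integrable_callFn hIσ' k)
                  (hIσ'.abs.add (integrable_const R)) hmono'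
            _ = Δ + R * (b - a) := by
                rw [integral_add hIσ'.abs (integrable_const R), integral_const, measureReal_def, hσmassR,
                  smul_eq_mul, ← hΔdef]
                ring
        have hpν : 0 ≤ put ν (-R) := put_nonneg ν _
        linarith
      · -- k < -R
        have hp1 : call (liftRestrict μhat b) k
            = put (liftRestrict μhat b) k + ∫ x, x ∂(liftRestrict μhat b) - k * b := by
          rw [call_eq_put _ (hIη b) k, hmassb]
        have hp2 : call ν k = put ν k + ∫ x, x ∂ν - k * 1 := by
          rw [call_eq_put ν hν k, measure_univ, ENNReal.toReal_one]
        have hp3 : put (liftRestrict μhat b) k ≤ put ν k :=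
          le_trans (put_mono_measure (hle b) (integrable_putFn hμ k)) (hput k)
        have hub' : call (liftRestrict μhat b) k - call ν k
            ≤ ∫ x, x ∂(liftRestrict μhat b) - ∫ x, x ∂ν + k * (1 - b) := by
          rw [hp1, hp2]; ring_nf; linarith [hp3]
        have hk1b : k * (1 - b) ≤ -R * (1 - b) := by
          apply mul_le_mul_of_nonneg_right (le_of_lt hk)
          have := hb.2; linarith
        -- lower bound for c a
        have hlb : c a ≥ -put ν (-R) + ∫ x, x ∂(liftRestrict μhat a) - ∫ x, x ∂ν
            - R * (1 - a) := by
          have h1 : call (liftRestrict μhat a) (-R) - call ν (-R) ≤ c a :=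
            le_csSup (hbdd a) ⟨-R, rfl⟩
          have h2 : call (liftRestrict μhat a) (-R)
              = put (liftRestrict μhat a) (-R) + ∫ x, x ∂(liftRestrict μhat a) - (-R) * a := by
            rw [call_eq_put _ (hIη a) (-R), hmassa]
          have h3 : call ν (-R) = put ν (-R) + ∫ x, x ∂ν - (-R) * 1 := by
            rw [call_eq_put ν hν (-R), measure_univ, ENNReal.toReal_one]
          have h4 : 0 ≤ put (liftRestrict μhat a) (-R) := put_nonneg _ _
          rw [h2, h3] at h1
          linarith
        linarith [hub', hk1b, hlb, hMab, hMσ]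
    -- conclude
    have hcb : c b ≤ c a + (put ν (-R) + Δ + R * (b - a)) := by
      apply csSup_le (hne b)
      rintro d ⟨k, rfl⟩
      exact perk k
    have hRba : R * (b - a) ≤ ε / 3 := by
      have h1 : b - a ≤ ε / (3 * R) := le_of_lt (lt_of_lt_of_le hsmall (min_le_right _ _))
      calc R * (b - a) ≤ R * (ε / (3 * R)) :=
            mul_le_mul_of_nonneg_left h1 (le_of_lt hRpos)
        _ = ε / 3 := by field_simp
    linarith
  -- wrap up : modulus
  intro a ha b hb hdist
  rcases le_total a b with hab | hab
  · have hba : b - a < δfin := by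
      have h := le_abs_self (b - a)
      rw [abs_sub_comm] at hdist
      linarith
    have h1 := key a ha b hb hab hba
    have h2 := hmono a b hab
    rw [abs_le]
    constructor <;> linarith
  · have hba : a - b < δfin := by
      have h := le_abs_self (a - b)
      linarith
    have h1 := key b hb a ha hab hba
    have h2 := hmono b a hab
    rw [abs_le]
    constructor <;> linarith
end
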